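/- arXiv:math/0511748 — 5 statements merged into one kernel-verified Lean document; each statement's English description precedes it below -/
import Mathlib

section
/- Let κ be an infinite cardinal with cf(κ) > ℵ₀ and let (S_i)_{i<κ}, S*, (π_i)_{i<κ}, (ρ_{i,j})_{i≤j<κ} be a coherent restriction system as in the context, with |S_i| < κ for every i < κ and |S*| ≥ κ⁺. If p ∈ S_i has many extensions (i.e., |π_i⁻¹(p)| ≥ κ⁺), then for all sufficiently large j with i < j < κ (i.e., there exists j₀ < κ such that for all j with j₀ ≤ j < κ) there exist two distinct elements q₀, q₁ ∈ S_j with ρ_{i,j}(q₀) = ρ_{i,j}(q₁) = p such that both q₀ and q₁ have many extensions. -/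
/-!
If the fibre of `p` contained no two points whose projections to some level `j > i` are
distinct and both have many extensions, then any two points of the fibre all of whose
projections have many extensions would agree at every level, hence be equal by injectivity.
Every other point of the fibre lies in the fibre of a small element of some `S j`; there are
at most `κ` levels, fewer than `κ` elements per level and at most `κ` points per small fibre,
so the fibre of `p` would have size at most `κ`. Hence two such projections exist at some
level `j₀`, and by the pigeonhole principle at the regular cardinal `κ⁺` each of them has an
extension with many extensions at every higher level.
-/

universe u v

open Cardinal

namespace Cardinal

def HasManyPreimages (κ : Cardinal.{u}) {X : Type u} {Y : Type v} (f : X → Y) (y : Y) : Prop :=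
  Order.succ κ ≤ #{x // f x = y}

variable {κ : Cardinal.{u}} {X Y : Type u}

theorem exists_hasManyPreimages (hκ : ℵ₀ ≤ κ) (f : X → Y) (hY : #Y ≤ κ)
    (hX : Order.succ κ ≤ #X) : ∃ y, HasManyPreimages κ f y := by
  have hcof : #Y < (Order.succ κ).ord.cof := by
    rw [(isRegular_succ hκ).cof_ord]
    exact hY.trans_lt (Order.lt_succ κ)
  exact infinite_pigeonhole_card f _ hX (hκ.trans (Order.le_succ κ)) hcof

theorem mk_setOf_not_hasManyPreimages_le (hκ : ℵ₀ ≤ κ) (f : X → Y) (hY : #Y ≤ κ) :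
    #{x | ¬ HasManyPreimages κ f (f x)} ≤ κ := by
  let g : {x | ¬ HasManyPreimages κ f (f x)} → Y := fun x => f x
  have hg : ∀ y, #(g ⁻¹' {y}) ≤ κ := by
    intro y
    rcases isEmpty_or_nonempty (g ⁻¹' {y}) with hempty | ⟨⟨x, rfl⟩⟩
    · simp only [mk_eq_zero, zero_le]
    · have hx : #{x' // f x' = f x} ≤ κ := Order.lt_succ_iff.1 (not_le.1 x.2)
      exact (mk_preimage_of_injective _ (f ⁻¹' {f x}) Subtype.val_injective).trans hx
  calc _ ≤ #Y * κ := mk_le_mk_mul_of_mk_preimage_le g hg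
    _ ≤ κ * κ := mul_le_mul_left hY κ
    _ = κ := mul_eq_self hκ

theorem mk_setOf_exists_not_hasManyPreimages_le {ι : Type v} {Y : ι → Type u}
    (hκ : ℵ₀ ≤ κ) (f : ∀ j, X → Y j) (hι : lift.{u} #ι ≤ lift.{v} κ) (hY : ∀ j, #(Y j) ≤ κ) :
    #{x | ∃ j, ¬ HasManyPreimages κ (f j) (f j x)} ≤ κ := by
  rw [Set.setOf_exists, ← lift_le.{v}]
  calc _ ≤ lift.{u} #ι * ⨆ j, lift.{v} #{x | ¬ HasManyPreimages κ (f j) (f j x)} :=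
        mk_iUnion_le_lift _
    _ ≤ lift.{v} κ * lift.{v} κ := by
        gcongr
        exact ciSup_le' fun j => lift_le.2 (mk_setOf_not_hasManyPreimages_le hκ (f j) (hY j))
    _ = lift.{v} κ := by rw [← lift_mul, mul_eq_self hκ]

end Cardinal

section RestrictionSystem

variable {κ : Cardinal.{u}} {S : Ordinal.{u} → Type u} {Sstar : Type u}
  {π : ∀ i, i < κ.ord → Sstar → S i} {ρ : ∀ i j, i ≤ j → j < κ.ord → S j → S i}

theorem exists_extension_hasManyPreimages (hκ : ℵ₀ ≤ κ)
    (hπρ : ∀ i j (hij : i ≤ j) (hj : j < κ.ord) (p : Sstar),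
      ρ i j hij hj (π j hj p) = π i (lt_of_le_of_lt hij hj) p)
    {j k : Ordinal.{u}} (hjk : j ≤ k) (hk : k < κ.ord) (hSk : #(S k) ≤ κ) {q : S j}
    (hq : HasManyPreimages κ (π j (hjk.trans_lt hk)) q) :
    ∃ q' : S k, ρ j k hjk hk q' = q ∧ HasManyPreimages κ (π k hk) q' := by
  obtain ⟨q', hq'⟩ := exists_hasManyPreimages hκ
    (fun r : {r // π j (hjk.trans_lt hk) r = q} => π k hk r.1) hSk hq
  obtain ⟨⟨r, hr⟩⟩ : Nonempty {r : {r // π j (hjk.trans_lt hk) r = q} // π k hk r.1 = q'} :=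
    mk_ne_zero_iff.1 ((Order.bot_lt_succ κ).trans_le hq').ne'
  exact ⟨q', by rw [← hr, hπρ, r.2],
    hq'.trans (mk_preimage_of_injective _ (π k hk ⁻¹' {q'}) Subtype.val_injective)⟩

theorem eq_of_forall_hasManyPreimages
    (hπρ : ∀ i j (hij : i ≤ j) (hj : j < κ.ord) (p : Sstar),
      ρ i j hij hj (π j hj p) = π i (lt_of_le_of_lt hij hj) p)
    (hinj : ∀ p q : Sstar, (∀ i (hi : i < κ.ord), π i hi p = π i hi q) → p = q)
    {i : Ordinal.{u}} (hi : i < κ.ord) {p : S i}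
    (hsplit : ∀ j (hij : i < j) (hj : j < κ.ord) (q₀ q₁ : S j),
      ρ i j hij.le hj q₀ = p → ρ i j hij.le hj q₁ = p →
      HasManyPreimages κ (π j hj) q₀ → HasManyPreimages κ (π j hj) q₁ → q₀ = q₁)
    {r s : Sstar} (hr : π i hi r = p) (hs : π i hi s = p)
    (hr' : ∀ j hj, HasManyPreimages κ (π j hj) (π j hj r))
    (hs' : ∀ j hj, HasManyPreimages κ (π j hj) (π j hj s)) : r = s := by
  refine hinj r s fun j hj => ?_
  rcases le_or_gt j i with hji | hij
  · rw [← hπρ j i hji hi r, ← hπρ j i hji hi s, hr, hs]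
  · exact hsplit j hij hj _ _ (by rw [hπρ, hr]) (by rw [hπρ, hs]) (hr' j hj) (hs' j hj)

theorem exists_two_extensions_hasManyPreimages (hκ : ℵ₀ ≤ κ)
    (hπρ : ∀ i j (hij : i ≤ j) (hj : j < κ.ord) (p : Sstar),
      ρ i j hij hj (π j hj p) = π i (lt_of_le_of_lt hij hj) p)
    (hinj : ∀ p q : Sstar, (∀ i (hi : i < κ.ord), π i hi p = π i hi q) → p = q)
    (hsmall : ∀ j, j < κ.ord → #(S j) ≤ κ)
    {i : Ordinal.{u}} (hi : i < κ.ord) {p : S i} (hmany : HasManyPreimages κ (π i hi) p) :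
    ∃ j, ∃ hij : i < j, ∃ hj : j < κ.ord, ∃ q₀ q₁ : S j, q₀ ≠ q₁ ∧
      ρ i j hij.le hj q₀ = p ∧ ρ i j hij.le hj q₁ = p ∧
      HasManyPreimages κ (π j hj) q₀ ∧ HasManyPreimages κ (π j hj) q₁ := by
  by_contra! hsplit
  let bad := {r | ∃ j : Set.Iio κ.ord, ¬ HasManyPreimages κ (π j.1 j.2) (π j.1 j.2 r)}
  let good := {r | π i hi r = p ∧ ∀ j hj, HasManyPreimages κ (π j hj) (π j hj r)}
  have hbad : #bad ≤ κ := by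
    refine mk_setOf_exists_not_hasManyPreimages_le hκ (fun j : Set.Iio κ.ord => π j.1 j.2) ?_
      fun j : Set.Iio κ.ord => hsmall j.1 j.2
    rw [mk_Iio_ordinal, card_ord, lift_lift]
  have hgood : #good ≤ 1 := mk_le_one_iff_set_subsingleton.2 fun r hr s hs =>
    eq_of_forall_hasManyPreimages hπρ hinj hi
      (fun j hij hj q₀ q₁ h₀ h₁ m₀ m₁ => by_contra fun hne => hsplit j hij hj q₀ q₁ hne h₀ h₁ m₀ m₁)
      hr.1 hs.1 hr.2 hs.2
  have hfiber : {r | π i hi r = p} ⊆ bad ∪ good := by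
    intro r hr
    by_cases hr' : r ∈ bad
    · exact Or.inl hr'
    · exact Or.inr ⟨hr, fun j hj => by_contra fun h => hr' ⟨⟨j, hj⟩, h⟩⟩
  have : Order.succ κ ≤ κ := calc
    Order.succ κ ≤ #{r | π i hi r = p} := hmany
    _ ≤ #bad + #good := (mk_le_mk_of_subset hfiber).trans (mk_union_le _ _)
    _ ≤ κ + 1 := add_le_add hbad hgood
    _ = κ := add_one_eq hκ
  exact (Order.lt_succ κ).not_ge this

end RestrictionSystem

theorem two_extensions_with_many_extensions_general
    (κ : Cardinal.{u}) (hκ : ℵ₀ ≤ κ)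
    (S : Ordinal.{u} → Type u) (Sstar : Type u)
    (π : ∀ i, i < κ.ord → Sstar → S i)
    (ρ : ∀ i j, i ≤ j → j < κ.ord → S j → S i)
    (hρ_comp : ∀ i j k (hij : i ≤ j) (hjk : j ≤ k) (hk : k < κ.ord) (p : S k),
      ρ i j hij (lt_of_le_of_lt hjk hk) (ρ j k hjk hk p) = ρ i k (hij.trans hjk) hk p)
    (hπρ : ∀ i j (hij : i ≤ j) (hj : j < κ.ord) (p : Sstar),
      ρ i j hij hj (π j hj p) = π i (lt_of_le_of_lt hij hj) p)
    (hinj : ∀ p q : Sstar, (∀ i (hi : i < κ.ord), π i hi p = π i hi q) → p = q)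
    (hsmall : ∀ i (hi : i < κ.ord), #(S i) < κ)
    (i : Ordinal.{u}) (hi : i < κ.ord) (p : S i)
    (hmany : Order.succ κ ≤ #{q : Sstar // π i hi q = p}) :
    ∃ j₀, ∃ hij₀ : i < j₀, j₀ < κ.ord ∧
      ∀ j (hj₀ : j₀ ≤ j) (hj : j < κ.ord),
        ∃ q₀ q₁ : S j, q₀ ≠ q₁ ∧
          ρ i j (le_of_lt (lt_of_lt_of_le hij₀ hj₀)) hj q₀ = p ∧
          ρ i j (le_of_lt (lt_of_lt_of_le hij₀ hj₀)) hj q₁ = p ∧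
          Order.succ κ ≤ #{r : Sstar // π j hj r = q₀} ∧
          Order.succ κ ≤ #{r : Sstar // π j hj r = q₁} := by
  obtain ⟨j₀, hij₀, hj₀, q₀, q₁, hne, hq₀, hq₁, hm₀, hm₁⟩ :=
    exists_two_extensions_hasManyPreimages hκ hπρ hinj (fun j hj => (hsmall j hj).le) hi hmany
  refine ⟨j₀, hij₀, hj₀, fun j hj₀j hj => ?_⟩
  obtain ⟨q₀', hρ₀, hm₀'⟩ :=
    exists_extension_hasManyPreimages hκ hπρ hj₀j hj (hsmall j hj).le hm₀
  obtain ⟨q₁', hρ₁, hm₁'⟩ :=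
    exists_extension_hasManyPreimages hκ hπρ hj₀j hj (hsmall j hj).le hm₁
  refine ⟨q₀', q₁', ?_, ?_, ?_, hm₀', hm₁'⟩
  · rintro rfl
    exact hne (hρ₀.symm.trans hρ₁)
  · rw [← hρ_comp i j₀ j hij₀.le hj₀j hj, hρ₀, hq₀]
  · rw [← hρ_comp i j₀ j hij₀.le hj₀j hj, hρ₁, hq₁]

theorem two_extensions_with_many_extensions
    (κ : Cardinal.{u}) (hκ : ℵ₀ ≤ κ) (hcf : ℵ₀ < κ.ord.cof)
    (S : Ordinal.{u} → Type u) (Sstar : Type u)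
    (π : ∀ i, i < κ.ord → Sstar → S i)
    (ρ : ∀ i j, i ≤ j → j < κ.ord → S j → S i)
    (hρ_id : ∀ i (hi : i < κ.ord) (p : S i), ρ i i le_rfl hi p = p)
    (hρ_comp : ∀ i j k (hij : i ≤ j) (hjk : j ≤ k) (hk : k < κ.ord) (p : S k),
      ρ i j hij (lt_of_le_of_lt hjk hk) (ρ j k hjk hk p) = ρ i k (hij.trans hjk) hk p)
    (hπρ : ∀ i j (hij : i ≤ j) (hj : j < κ.ord) (p : Sstar),
      ρ i j hij hj (π j hj p) = π i (lt_of_le_of_lt hij hj) p)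
    (hinj : ∀ p q : Sstar, (∀ i (hi : i < κ.ord), π i hi p = π i hi q) → p = q)
    (hsmall : ∀ i (hi : i < κ.ord), #(S i) < κ)
    (hbig : Order.succ κ ≤ #Sstar)
    (i : Ordinal.{u}) (hi : i < κ.ord) (p : S i)
    (hmany : Order.succ κ ≤ #{q : Sstar // π i hi q = p}) :
    ∃ j₀, ∃ hij₀ : i < j₀, j₀ < κ.ord ∧
      ∀ j (hj₀ : j₀ ≤ j) (hj : j < κ.ord),
        ∃ q₀ q₁ : S j, q₀ ≠ q₁ ∧
          ρ i j (le_of_lt (lt_of_lt_of_le hij₀ hj₀)) hj q₀ = p ∧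
          ρ i j (le_of_lt (lt_of_lt_of_le hij₀ hj₀)) hj q₁ = p ∧
          Order.succ κ ≤ #{r : Sstar // π j hj r = q₀} ∧
          Order.succ κ ≤ #{r : Sstar // π j hj r = q₁} :=
  two_extensions_with_many_extensions_general κ hκ S Sstar π ρ hρ_comp hπρ hinj hsmall i hi p hmany
end

section
/- Let κ be an infinite cardinal with cf(κ) > ℵ₀ and let (S_i)_{i<κ}, S*, (π_i)_{i<κ}, (ρ_{i,j})_{i≤j<κ} be a coherent restriction system as in the context, with |S_i| < κ for every i < κ. If |S*| ≥ κ⁺, then there exist a strictly increasing sequence (j_n)_{n<ω} of ordinals below κ and a binary tree of elements (p_s)_{s ∈ 2^{<ω}} with p_s ∈ S_{j_n} for each s of length n, such that for every s of length n: ρ_{j_n, j_{n+1}}(p_{s⌢0}) = ρ_{j_n, j_{n+1}}(p_{s⌢1}) = p_s and p_{s⌢0} ≠ p_{s⌢1}. Consequently, the inverse limit along this countable subchain, namely the set of threads {(q_n)_{n<ω} ∈ ∏_{n<ω} S_{j_n} : ρ_{j_m, j_n}(q_n) = q_m for all m ≤ n < ω}, has cardinality at least 2^{ℵ₀}. -/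
/-!
Call a set of elements of `Sstar` large if it has more than `κ` elements. Every large set `A`
splits at some level `i < κ`: `π i` has two large fibres on `A`. Otherwise each `π i` has a
unique large fibre on `A`, whose complement in `A` has at most `κ` elements since `|S i| ≤ κ`;
the fibres meet in at most one point because `p ↦ (π i p)_i` is injective, so
`|A| ≤ 1 + κ · κ = κ`. Splitting the `2ⁿ` large sets of stage `n`, lifting the finitely many
splitting levels to a common level `J < κ` and passing to large fibres of `π J` gives stage
`n + 1` of the tree. Distinct branches of the tree are distinct threads.
-/

universe u

open Cardinal Set

section Pigeonhole

variable {X : Type u} {κ : Cardinal.{u}}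

theorem exists_lt_mk_inter_preimage_singleton (hκ : ℵ₀ ≤ κ) {Y : Type u} (f : X → Y)
    (hY : #Y ≤ κ) {A : Set X} (hA : κ < #A) : ∃ y, κ < #(A ∩ f ⁻¹' {y} : Set X) := by
  obtain ⟨y, hy⟩ := infinite_pigeonhole_card (A.domRestrict f) (Order.succ κ)
    (Order.succ_le_of_lt hA) (hκ.trans (Order.le_succ κ))
    (by rw [(isRegular_succ hκ).cof_ord]; exact Order.lt_succ_iff.mpr hY)
  refine ⟨y, Order.succ_le_iff.mp (hy.trans_eq ?_)⟩
  change #(Subtype.val ⁻¹' (f ⁻¹' {y}) : Set A) = _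
  rw [← mk_image_eq Subtype.val_injective, Subtype.image_preimage_coe]

theorem exists_two_lt_mk_inter_preimage_singleton (hκ : ℵ₀ ≤ κ) {ι : Type u}
    {T : ι → Type u} (hι : #ι ≤ κ) (hT : ∀ i, #(T i) ≤ κ) (f : ∀ i, X → T i)
    (hf : ∀ x y, (∀ i, f i x = f i y) → x = y) {A : Set X} (hA : κ < #A) :
    ∃ i, ∃ v w : T i, v ≠ w ∧ κ < #(A ∩ f i ⁻¹' {v} : Set X) ∧
      κ < #(A ∩ f i ⁻¹' {w} : Set X) := by
  by_contra! h
  choose v hv using fun i => exists_lt_mk_inter_preimage_singleton hκ (f i) (hT i) hA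
  have hrest : ∀ i, #(A \ f i ⁻¹' {v i} : Set X) ≤ κ := by
    intro i
    by_contra! hi
    obtain ⟨w, hw⟩ := exists_lt_mk_inter_preimage_singleton hκ (f i) (hT i) hi
    have hwv : w ≠ v i := by
      rintro rfl
      simp at hw
    refine (h i (v i) w hwv.symm (hv i)).not_gt (hw.trans_le (mk_le_mk_of_subset ?_))
    exact inter_subset_inter_left _ sdiff_subset
  have hcore : (⋂ i, f i ⁻¹' {v i}).Subsingleton := fun x hx y hy =>
    hf x y fun i => by simp_all
  have hcover : A ⊆ (⋂ i, f i ⁻¹' {v i}) ∪ ⋃ i, A \ f i ⁻¹' {v i} := by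
    intro x hx
    by_cases hxv : x ∈ ⋂ i, f i ⁻¹' {v i}
    · exact Or.inl hxv
    · obtain ⟨i, hi⟩ := not_forall.mp (mt mem_iInter.mpr hxv)
      exact Or.inr (mem_iUnion.mpr ⟨i, hx, hi⟩)
  refine hA.not_ge ((mk_le_mk_of_subset hcover).trans ?_)
  calc #((⋂ i, f i ⁻¹' {v i}) ∪ ⋃ i, A \ f i ⁻¹' {v i} : Set X)
      ≤ #(⋂ i, f i ⁻¹' {v i}) + #(⋃ i, A \ f i ⁻¹' {v i}) := mk_union_le _ _
    _ ≤ 1 + #ι * κ := add_le_add (mk_le_one_iff_set_subsingleton.mpr hcore)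
        ((mk_iUnion_le _).trans (mul_le_mul' le_rfl (ciSup_le' hrest)))
    _ ≤ κ := add_le_of_le hκ (one_le_aleph0.trans hκ) (mul_le_of_le hκ hι le_rfl)

end Pigeonhole

section RestrictionSystem

variable {κ : Cardinal.{u}} {S : Ordinal.{u} → Type u} {X : Type u}
  (π : ∀ i, i < κ.ord → X → S i) (ρ : ∀ i j, i ≤ j → j < κ.ord → S j → S i)

theorem exists_level_two_lt_mk_inter_preimage_singleton (hκ : ℵ₀ ≤ κ)
    (hinj : ∀ x y : X, (∀ i (hi : i < κ.ord), π i hi x = π i hi y) → x = y)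
    (hsmall : ∀ i, i < κ.ord → #(S i) ≤ κ) {A : Set X} (hA : κ < #A) :
    ∃ i, ∃ hi : i < κ.ord, ∃ v w : S i, v ≠ w ∧ κ < #(A ∩ π i hi ⁻¹' {v} : Set X) ∧
      κ < #(A ∩ π i hi ⁻¹' {w} : Set X) := by
  obtain ⟨t, v, w, hvw, hv, hw⟩ := exists_two_lt_mk_inter_preimage_singleton hκ
    (T := fun t : κ.ord.ToType => S (Ordinal.ToType.mk.symm t)) (mk_ord_toType κ).le
    (fun t => hsmall _ (Ordinal.ToType.mk.symm t).2)
    (fun t => π _ (Ordinal.ToType.mk.symm t).2)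
    (fun x y hxy => hinj x y fun i hi => by
      have h := hxy (Ordinal.ToType.mk ⟨i, hi⟩)
      rwa [OrderIso.symm_apply_apply] at h) hA
  exact ⟨_, _, v, w, hvw, hv, hw⟩

theorem exists_common_level_split (hκ : ℵ₀ ≤ κ)
    (hπρ : ∀ i j (hij : i ≤ j) (hj : j < κ.ord) (x : X),
      ρ i j hij hj (π j hj x) = π i (lt_of_le_of_lt hij hj) x)
    (hinj : ∀ x y : X, (∀ i (hi : i < κ.ord), π i hi x = π i hi y) → x = y)
    (hsmall : ∀ i, i < κ.ord → #(S i) ≤ κ) {σ : Type*} [Fintype σ]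
    {j₀ : Ordinal.{u}} (hj₀ : j₀ < κ.ord) (A : σ → Set X) (hA : ∀ s, κ < #(A s)) :
    ∃ J, j₀ < J ∧ ∃ hJ : J < κ.ord, ∃ (B : σ → Bool → Set X) (q : σ → Bool → S J),
      (∀ s b, B s b ⊆ A s ∩ π J hJ ⁻¹' {q s b} ∧ κ < #(B s b)) ∧
      ∀ s, q s false ≠ q s true := by
  choose i hi v w hvw hv hw using fun s =>
    exists_level_two_lt_mk_inter_preimage_singleton π hκ hinj hsmall (hA s)
  set J := max (Order.succ j₀) (Finset.univ.sup i)
  have hJ : J < κ.ord := max_lt ((isSuccLimit_ord hκ).succ_lt hj₀)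
    ((Finset.sup_lt_iff (isSuccLimit_ord hκ).bot_lt).mpr fun s _ => hi s)
  have hiJ : ∀ s, i s ≤ J := fun s => (Finset.le_sup (Finset.mem_univ s)).trans (le_max_right _ _)
  let C : σ → Bool → Set X := fun s b => A s ∩ π (i s) (hi s) ⁻¹' {cond b (w s) (v s)}
  have hC : ∀ s b, κ < #(C s b) := fun s b => by cases b; exacts [hv s, hw s]
  choose q hq using fun s b =>
    exists_lt_mk_inter_preimage_singleton hκ (π J hJ) (hsmall J hJ) (hC s b)
  refine ⟨J, (Order.lt_succ j₀).trans_le (le_max_left _ _), hJ,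
    fun s b => C s b ∩ π J hJ ⁻¹' {q s b}, q,
    fun s b => ⟨inter_subset_inter_left _ inter_subset_left, hq s b⟩, fun s hqs => hvw s ?_⟩
  have hρq : ∀ b, ρ (i s) J (hiJ s) hJ (q s b) = cond b (w s) (v s) := by
    intro b
    obtain ⟨x, ⟨-, hxi⟩, hxJ⟩ := mk_set_ne_zero_iff.mp (hq s b).ne_bot
    rw [← mem_singleton_iff.mp hxJ, hπρ]
    exact hxi
  simpa [hqs, hρq true] using (hρq false).symm

structure TreeLevel (n : ℕ) where
  j : Ordinal.{u}
  lt : j < κ.ord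
  p : (Fin n → Bool) → S j
  A : (Fin n → Bool) → Set X
  lt_mk : ∀ s, κ < #(A s)
  subset : ∀ s, A s ⊆ π j lt ⁻¹' {p s}

variable {π}

theorem TreeLevel.exists_succ (hκ : ℵ₀ ≤ κ)
    (hπρ : ∀ i j (hij : i ≤ j) (hj : j < κ.ord) (x : X),
      ρ i j hij hj (π j hj x) = π i (lt_of_le_of_lt hij hj) x)
    (hinj : ∀ x y : X, (∀ i (hi : i < κ.ord), π i hi x = π i hi y) → x = y)
    (hsmall : ∀ i, i < κ.ord → #(S i) ≤ κ) {n : ℕ} (L : TreeLevel π n) :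
    ∃ L' : TreeLevel π (n + 1), ∃ h : L.j < L'.j, ∀ s : Fin n → Bool,
      (∀ b, ρ L.j L'.j h.le L'.lt (L'.p (Fin.snoc s b)) = L.p s) ∧
      L'.p (Fin.snoc s false) ≠ L'.p (Fin.snoc s true) := by
  obtain ⟨J, hj, hJ, B, q, hB, hq⟩ :=
    exists_common_level_split π ρ hκ hπρ hinj hsmall L.lt L.A L.lt_mk
  refine ⟨⟨J, hJ, fun t => q (Fin.init t) (t (Fin.last n)),
    fun t => B (Fin.init t) (t (Fin.last n)), fun t => (hB _ _).2,
    fun t => (hB _ _).1.trans inter_subset_right⟩, hj, fun s => ⟨fun b => ?_, ?_⟩⟩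
  · simp only [Fin.init_snoc, Fin.snoc_last]
    obtain ⟨x, hx⟩ := mk_set_ne_zero_iff.mp (hB s b).2.ne_bot
    obtain ⟨hxA, hxJ⟩ := (hB s b).1 hx
    rw [← mem_singleton_iff.mp hxJ, hπρ]
    exact L.subset s hxA
  · simpa only [Fin.init_snoc, Fin.snoc_last] using hq s

theorem exists_tree (hκ : ℵ₀ ≤ κ)
    (hπρ : ∀ i j (hij : i ≤ j) (hj : j < κ.ord) (x : X),
      ρ i j hij hj (π j hj x) = π i (lt_of_le_of_lt hij hj) x)
    (hinj : ∀ x y : X, (∀ i (hi : i < κ.ord), π i hi x = π i hi y) → x = y)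
    (hsmall : ∀ i, i < κ.ord → #(S i) ≤ κ) (hbig : κ < #X) :
    ∃ j : ℕ → Ordinal.{u}, ∃ hmono : StrictMono j, ∃ hlt : ∀ n, j n < κ.ord,
      ∃ p : ∀ n, (Fin n → Bool) → S (j n), ∀ n (s : Fin n → Bool),
        (∀ b, ρ (j n) (j (n + 1)) (hmono.monotone (Nat.le_succ n)) (hlt (n + 1))
            (p (n + 1) (Fin.snoc s b)) = p n s) ∧
        p (n + 1) (Fin.snoc s false) ≠ p (n + 1) (Fin.snoc s true) := by
  have h0 : 0 < κ.ord := (isSuccLimit_ord hκ).bot_lt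
  obtain ⟨v, hv⟩ := exists_lt_mk_inter_preimage_singleton hκ (π 0 h0) (hsmall 0 h0)
    (A := univ) (by rwa [mk_univ])
  let root : TreeLevel π 0 :=
    ⟨0, h0, fun _ => v, fun _ => univ ∩ π 0 h0 ⁻¹' {v}, fun _ => hv, fun _ => inter_subset_right⟩
  choose next hnext hstep using fun n (L : TreeLevel π n) =>
    L.exists_succ ρ hκ hπρ hinj hsmall
  let L : ∀ n, TreeLevel π n := fun n => Nat.rec root next n
  exact ⟨fun n => (L n).j, strictMono_nat_of_lt_succ fun n => hnext n (L n), fun n => (L n).lt,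
    fun n => (L n).p, fun n => hstep n (L n)⟩

end RestrictionSystem

theorem two_pow_aleph0_le_mk_threads {T : ℕ → Type u} (r : ∀ ⦃m n : ℕ⦄, m ≤ n → T n → T m)
    [InverseSystem r] (p : ∀ n, (Fin n → Bool) → T n)
    (hp : ∀ n s b, r (Nat.le_succ n) (p (n + 1) (Fin.snoc s b)) = p n s)
    (hne : ∀ n s, p (n + 1) (Fin.snoc s false) ≠ p (n + 1) (Fin.snoc s true)) :
    (2 : Cardinal.{u}) ^ ℵ₀ ≤ #{q : ∀ n, T n // ∀ m n (h : m ≤ n), r h (q n) = q m} := by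
  let branch (x : ℕ → Bool) (n : ℕ) : T n := p n fun k => x k
  have hbranch_succ (x : ℕ → Bool) (n : ℕ) :
      branch x (n + 1) = p (n + 1) (Fin.snoc (fun k : Fin n => x k) (x n)) :=
    congrArg (p (n + 1)) (Fin.snoc_init_self fun k : Fin (n + 1) => x k).symm
  have hthread (x : ℕ → Bool) (m n : ℕ) (h : m ≤ n) : r h (branch x n) = branch x m := by
    induction n, h using Nat.le_induction with
    | base => exact InverseSystem.map_self _
    | succ n hmn ih =>
      rw [← InverseSystem.map_map (f := r) hmn (Nat.le_succ n), hbranch_succ, hp, ih]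
  have hinj : Function.Injective fun x => (⟨branch x, hthread x⟩ :
      {q : ∀ n, T n // ∀ m n (h : m ≤ n), r h (q n) = q m}) := by
    intro x y hxy
    funext n
    induction n using Nat.strong_induction_on with
    | _ n ih =>
      have hprefix : (fun k : Fin n => x k) = fun k : Fin n => y k := funext fun k => ih k k.2
      have h : branch x (n + 1) = branch y (n + 1) := congr_fun (congrArg Subtype.val hxy) (n + 1)
      rw [hbranch_succ, hbranch_succ, hprefix] at h
      exact (Bool.injective_iff (f := fun b => p (n + 1) (Fin.snoc _ b))).mpr (hne n _) h
  simpa using lift_mk_le_lift_mk_of_injective hinj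

theorem binary_tree_of_types_and_many_threads_general
    (κ : Cardinal.{u}) (hκ : ℵ₀ ≤ κ)
    (S : Ordinal.{u} → Type u) (Sstar : Type u)
    (π : ∀ i, i < κ.ord → Sstar → S i)
    (ρ : ∀ i j, i ≤ j → j < κ.ord → S j → S i)
    (hρ_id : ∀ i (hi : i < κ.ord) (p : S i), ρ i i le_rfl hi p = p)
    (hρ_comp : ∀ i j k (hij : i ≤ j) (hjk : j ≤ k) (hk : k < κ.ord) (p : S k),
      ρ i j hij (lt_of_le_of_lt hjk hk) (ρ j k hjk hk p) = ρ i k (hij.trans hjk) hk p)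
    (hπρ : ∀ i j (hij : i ≤ j) (hj : j < κ.ord) (p : Sstar),
      ρ i j hij hj (π j hj p) = π i (lt_of_le_of_lt hij hj) p)
    (hinj : ∀ p q : Sstar, (∀ i (hi : i < κ.ord), π i hi p = π i hi q) → p = q)
    (hsmall : ∀ i (hi : i < κ.ord), #(S i) < κ)
    (hbig : Order.succ κ ≤ #Sstar) :
    ∃ j : ℕ → Ordinal.{u}, ∃ hmono : StrictMono j, ∃ hlt : ∀ n, j n < κ.ord,
      (∃ p : ∀ n, (Fin n → Bool) → S (j n),
        ∀ n (s : Fin n → Bool),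
          (∀ b : Bool, ρ (j n) (j (n + 1)) (hmono.monotone (Nat.le_succ n)) (hlt (n + 1))
              (p (n + 1) (Fin.snoc s b)) = p n s) ∧
          p (n + 1) (Fin.snoc s false) ≠ p (n + 1) (Fin.snoc s true)) ∧
      (2 : Cardinal.{u}) ^ (ℵ₀ : Cardinal.{u}) ≤
        #{q : ∀ n, S (j n) //
          ∀ m n (hmn : m ≤ n), ρ (j m) (j n) (hmono.monotone hmn) (hlt n) (q n) = q m} := by
  obtain ⟨j, hmono, hlt, p, htree⟩ :=
    exists_tree ρ hκ hπρ hinj (fun i hi => (hsmall i hi).le) (Order.succ_le_iff.mp hbig)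
  let r : ∀ ⦃m n : ℕ⦄, m ≤ n → S (j n) → S (j m) := fun m n h =>
    ρ (j m) (j n) (hmono.monotone h) (hlt n)
  have : InverseSystem r :=
    ⟨fun n => hρ_id (j n) (hlt n), fun _ _ _ _ _ => hρ_comp _ _ _ _ _ _⟩
  exact ⟨j, hmono, hlt, ⟨p, htree⟩,
    two_pow_aleph0_le_mk_threads r p (fun n s => (htree n s).1) fun n s => (htree n s).2⟩

theorem binary_tree_of_types_and_many_threads
    (κ : Cardinal.{u}) (hκ : ℵ₀ ≤ κ) (hcf : ℵ₀ < κ.ord.cof)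
    (S : Ordinal.{u} → Type u) (Sstar : Type u)
    (π : ∀ i, i < κ.ord → Sstar → S i)
    (ρ : ∀ i j, i ≤ j → j < κ.ord → S j → S i)
    (hρ_id : ∀ i (hi : i < κ.ord) (p : S i), ρ i i le_rfl hi p = p)
    (hρ_comp : ∀ i j k (hij : i ≤ j) (hjk : j ≤ k) (hk : k < κ.ord) (p : S k),
      ρ i j hij (lt_of_le_of_lt hjk hk) (ρ j k hjk hk p) = ρ i k (hij.trans hjk) hk p)
    (hπρ : ∀ i j (hij : i ≤ j) (hj : j < κ.ord) (p : Sstar),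
      ρ i j hij hj (π j hj p) = π i (lt_of_le_of_lt hij hj) p)
    (hinj : ∀ p q : Sstar, (∀ i (hi : i < κ.ord), π i hi p = π i hi q) → p = q)
    (hsmall : ∀ i (hi : i < κ.ord), #(S i) < κ)
    (hbig : Order.succ κ ≤ #Sstar) :
    ∃ j : ℕ → Ordinal.{u}, ∃ hmono : StrictMono j, ∃ hlt : ∀ n, j n < κ.ord,
      (∃ p : ∀ n, (Fin n → Bool) → S (j n),
        ∀ n (s : Fin n → Bool),
          (∀ b : Bool, ρ (j n) (j (n + 1)) (hmono.monotone (Nat.le_succ n)) (hlt (n + 1))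
              (p (n + 1) (Fin.snoc s b)) = p n s) ∧
          p (n + 1) (Fin.snoc s false) ≠ p (n + 1) (Fin.snoc s true)) ∧
      (2 : Cardinal.{u}) ^ (ℵ₀ : Cardinal.{u}) ≤
        #{q : ∀ n, S (j n) //
          ∀ m n (hmn : m ≤ n), ρ (j m) (j n) (hmono.monotone hmn) (hlt n) (q n) = q m} :=
  binary_tree_of_types_and_many_threads_general κ hκ S Sstar π ρ hρ_id hρ_comp hπρ hinj hsmall hbig
end

section
/- Let L be a countable first-order language and T a complete L-theory with infinite models. Let κ be an infinite cardinal with cf(κ) > ℵ₀. If T is stable in every infinite cardinal μ < κ, then T is stable in κ. -/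
/-!
Stability in `ℵ₀` alone already gives stability in every infinite `κ`. Suppose a model `M` of
size `κ` had more than `κ` types. There are only `κ` formulas over `M`, so every formula satisfied
by more than `κ` types can be split by some `ψ` into two such formulas `φ ∧ ψ` and `φ ∧ ¬ψ`.
Iterating gives a binary tree of formulas, and compactness of the type space gives a type through
each of the `2^ℵ₀` branches. The countably many parameters of the tree lie in a countable
elementary substructure `N`, and the restrictions of the branch types to `N` remain pairwise
distinct, so `N` has uncountably many types.
-/

universe u

open Cardinal FirstOrder FirstOrder.Language

namespace StabilityTransfer

variable (L : FirstOrder.Language.{u, u})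

/-- `S(M)`: the set of complete 1-types over the model `M`, i.e. complete types in one
free variable of the elementary diagram of `M`. -/
abbrev typesOver (M : Type u) [L.Structure M] : Type u :=
  (L.elementaryDiagram M).CompleteType Unit

/-- `T` is stable in `λ`: `|S(M)| ≤ λ` for every model `M` of `T` of cardinality `λ`. -/
def IsStableIn (T : L.Theory) (lam : Cardinal.{u}) : Prop :=
  ∀ M : Theory.ModelType.{u, u, u} T, #M = lam → #(typesOver L M) ≤ lam

universe v

section

open Set

variable {L}

theorem exists_lt_mk_inter_and_lt_mk_diff {S ι : Type u} (A : ι → Set S) {κ : Cardinal.{u}}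
    (hκ : ℵ₀ ≤ κ) (hι : #ι ≤ κ) (hsep : ∀ p q, p ≠ q → ∃ i, p ∈ A i ∧ q ∉ A i) {X : Set S}
    (hX : κ < #X) : ∃ i, κ < #↥(X ∩ A i) ∧ κ < #↥(X \ A i) := by
  by_contra! hsmall
  classical
  let P : ι → Set S := fun i => if #↥(X ∩ A i) ≤ κ then X ∩ A i else X \ A i
  have hP : ∀ i, #(P i) ≤ κ := fun i => by
    by_cases h : #↥(X ∩ A i) ≤ κ
    · simp [P, h]
    · simpa [P, h] using hsmall i (not_le.1 h)
  have hU : #↥(⋃ i, P i) ≤ κ :=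
    calc #↥(⋃ i, P i) ≤ #ι * ⨆ i, #(P i) := mk_iUnion_le P
      _ ≤ κ * κ := mul_le_mul' hι (ciSup_le' hP)
      _ = κ := mul_eq_self hκ
  -- a separating set `A i` would put one of two distinct points of `X \ ⋃ P` into `P i`
  have hrest : (X \ ⋃ i, P i).Subsingleton := by
    rintro p ⟨hpX, hpU⟩ q ⟨hqX, hqU⟩
    by_contra hpq
    obtain ⟨i, hp, hq⟩ := hsep p q hpq
    by_cases h : #↥(X ∩ A i) ≤ κ
    · exact hpU (mem_iUnion.2 ⟨i, by simpa [P, h] using ⟨hpX, hp⟩⟩)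
    · exact hqU (mem_iUnion.2 ⟨i, by simpa [P, h] using ⟨hqX, hq⟩⟩)
  refine hX.not_ge ?_
  calc #X ≤ #↥((⋃ i, P i) ∪ (X \ ⋃ i, P i)) := mk_le_mk_of_subset (fun x hx => by
          by_cases h : x ∈ ⋃ i, P i
          · exact Or.inl h
          · exact Or.inr ⟨hx, h⟩)
    _ ≤ κ + 1 := (mk_union_le _ _).trans (add_le_add hU (mk_le_one_iff_set_subsingleton.2 hrest))
    _ = κ := add_one_eq hκ

theorem exists_injective_cantorScheme {S ι : Type u} [TopologicalSpace S] [CompactSpace S]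
    (A : ι → Set S) (hA : ∀ i, IsClopen (A i)) {κ : Cardinal.{u}} (hκ : ℵ₀ ≤ κ) (hι : #ι ≤ κ)
    (hsep : ∀ p q, p ≠ q → ∃ i, p ∈ A i ∧ q ∉ A i) (hS : κ < #S) :
    ∃ (i : List Bool → ι) (p : (ℕ → Bool) → S), Function.Injective fun σ s => p σ ∈ A (i s) := by
  let Big := {X : Set S // IsClosed X ∧ κ < #X}
  choose c hc using fun X : Big => exists_lt_mk_inter_and_lt_mk_diff A hκ hι hsep X.2.2
  let piece : Big → Bool → Set S := fun X b => X.1 ∩ if b then A (c X) else (A (c X))ᶜ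
  have hpiece : ∀ X b, IsClosed (piece X b) ∧ κ < #(piece X b) := by
    rintro X (_ | _)
    · exact ⟨X.2.1.inter (hA (c X)).isOpen.isClosed_compl,
        by simpa [piece, sdiff_eq] using (hc X).2⟩
    · exact ⟨X.2.1.inter (hA (c X)).isClosed, by simpa [piece] using (hc X).1⟩
  have mem_piece : ∀ X b x, x ∈ piece X b → (x ∈ A (c X) ↔ b = true) := by
    rintro X (_ | _) x ⟨-, hx⟩ <;> simpa using hx
  let node : List Bool → Big := List.foldr (fun b X => ⟨piece X b, hpiece X b⟩)
    ⟨univ, isClosed_univ, by rwa [mk_univ]⟩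
  -- `pre σ n = [σ (n - 1), …, σ 0]`, so that extending a branch is `List.cons`, as in `node`
  let pre : (ℕ → Bool) → ℕ → List Bool := fun σ n => (List.range n).reverse.map σ
  have hpre : ∀ σ n, pre σ (n + 1) = σ n :: pre σ n := fun σ n => by simp [pre, List.range_succ]
  have hbranch : ∀ σ, (⋂ n, (node (pre σ n)).1).Nonempty := fun σ =>
    IsCompact.nonempty_iInter_of_sequence_nonempty_isCompact_isClosed (fun n => (node (pre σ n)).1)
      (fun n => by rw [hpre]; exact inter_subset_left)
      (fun n => nonempty_coe_sort.1 (mk_ne_zero_iff.1 (pos_of_gt (node _).2.2).ne'))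
      (node _).2.1.isCompact (fun n => (node _).2.1)
  choose p hp using hbranch
  refine ⟨fun s => c (node s), p, fun σ τ hστ => ?_⟩
  have hstep : ∀ n, pre σ n = pre τ n → σ n = τ n := fun n hn => by
    have hσ := mem_iInter.1 (hp σ) (n + 1)
    have hτ := mem_iInter.1 (hp τ) (n + 1)
    rw [hpre] at hσ hτ
    rw [Bool.eq_iff_iff, ← mem_piece _ _ _ hσ, ← mem_piece _ _ _ hτ, ← hn]
    exact eq_iff_iff.1 (congrFun hστ (pre σ n))
  have hpre_eq : ∀ n, pre σ n = pre τ n := by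
    intro n
    induction n with
    | zero => rfl
    | succ n ih => rw [hpre, hpre, ih, hstep n ih]
  exact funext fun n => hstep n (hpre_eq n)

theorem mk_formula_le {α : Type u} {κ : Cardinal.{u}} (hκ : ℵ₀ ≤ κ) (hα : #α ≤ κ)
    (hL : L.card ≤ κ) : #(L.Formula α) ≤ κ := by
  refine (mk_le_of_injective (sigma_mk_injective (i := 0))).trans
    (BoundedFormula.card_le.trans (max_le hκ ?_))
  simpa using add_le_of_le hκ hα hL

theorem exists_formula_realize_comp_iff {β δ : Type*} [DecidableEq β] (θ : L.Formula β)
    (f : δ → β) (hf : ↑θ.freeVarFinset ⊆ range f) :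
    ∃ θ' : L.Formula δ, ∀ {P : Type*} [L.Structure P] (w : β → P),
      θ'.Realize (w ∘ f) ↔ θ.Realize w := by
  choose g hg using fun a : θ.freeVarFinset => hf a.2
  exact ⟨θ.restrictFreeVar g, fun w => BoundedFormula.realize_restrictFreeVar w fun a => by
    simp [hg]⟩

theorem exists_mem_notMem_of_ne {T : L.Theory} {α : Type*} {p q : T.CompleteType α}
    (hpq : p ≠ q) : ∃ φ, φ ∈ p ∧ φ ∉ q := by
  by_contra! hle
  refine hpq (le_antisymm hle fun φ hφq => ?_)
  by_contra hφp
  exact (q.not_mem_iff φ).1 (hle _ ((p.not_mem_iff φ).2 hφp)) hφq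

/-- A formula over `M` in the variables `α` is handled as an `L`-formula whose parameters are free
variables from `M`. -/
def paramSentenceEquiv (M α : Type*) : L.Formula (M ⊕ α) ≃ L[[M]][[α]].Sentence :=
  BoundedFormula.constantsVarsEquiv.symm.trans Formula.equivSentence

theorem paramSentenceEquiv_mem_typeOf {M P α : Type*} {T : L[[M]].Theory} [L.Structure P]
    [L[[M]].Structure P] [(L.lhomWithConstants M).IsExpansionOn P] [Nonempty P] [P ⊨ T]
    (v : α → P) (θ : L.Formula (M ⊕ α)) :
    paramSentenceEquiv M α θ ∈ T.typeOf v ↔ θ.Realize (Sum.elim (fun m => (L.con m : P)) v) := by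
  rw [Theory.CompleteType.mem_typeOf, paramSentenceEquiv, Equiv.trans_apply,
    Equiv.symm_apply_apply]
  have h := BoundedFormula.realize_constantsVarsEquiv (M := P)
    (φ := BoundedFormula.constantsVarsEquiv.symm θ) (v := v) (xs := default)
  rw [Equiv.apply_symm_apply] at h
  exact h.symm

theorem model_elementaryDiagram_of_elementaryEmbedding {N P : Type*} [L.Structure N]
    [L.Structure P] [(constantsOn N).Structure P] (g : N ↪ₑ[L] P)
    (hg : ∀ a : N, (L.con a : P) = g a) : P ⊨ L.elementaryDiagram N := by
  refine (Theory.model_iff _).2 fun χ hχ => ?_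
  rw [mem_completeTheory, ← Formula.equivSentence.apply_symm_apply χ,
    Formula.realize_equivSentence] at hχ
  rw [← Formula.equivSentence.apply_symm_apply χ, Formula.realize_equivSentence,
    show (fun a : N => (L.con a : P)) = g ∘ id from funext hg, g.map_formula]
  exact hχ

theorem exists_completeType_restrict {M N : Type u} [L.Structure M] [L.Structure N]
    (f : N ↪ₑ[L] M) {α : Type v} (p : (L.elementaryDiagram M).CompleteType α) :
    ∃ q : (L.elementaryDiagram N).CompleteType α,
      ∀ (θ' : L.Formula (N ⊕ α)) (θ : L.Formula (M ⊕ α)),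
        (∀ (P : Type (max u v)) [L.Structure P] (w : M ⊕ α → P),
          θ'.Realize (w ∘ Sum.map f id) ↔ θ.Realize w) →
        (paramSentenceEquiv N α θ' ∈ q ↔ paramSentenceEquiv M α θ ∈ p) := by
  obtain ⟨P, v, rfl⟩ := Theory.exists_modelType_is_realized_in (L.elementaryDiagram M) p
  let _ : L.Structure P := (L.lhomWithConstants M).reduct P
  have _ := LHom.isExpansionOn_reduct (L.lhomWithConstants M) P
  let e := ElementaryEmbedding.ofModelsElementaryDiagram L M P
  let _ : (constantsOn N).Structure P := constantsOn.structure (e ∘ f)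
  have _ := model_elementaryDiagram_of_elementaryEmbedding (e.comp f) fun _ => rfl
  refine ⟨(L.elementaryDiagram N).typeOf v, fun θ' θ hθ => ?_⟩
  rw [paramSentenceEquiv_mem_typeOf, paramSentenceEquiv_mem_typeOf, ← hθ, Sum.elim_comp_map,
    Function.comp_id]
  rfl

theorem exists_elementarySubstructure_aleph0_of_countable {ι : Type*} [Countable ι]
    (hL : L.card ≤ ℵ₀) {M : Type u} [L.Structure M] (hM : ℵ₀ ≤ #M) {α : Type v}
    (θ : ι → L.Formula (M ⊕ α)) :
    ∃ N : L.ElementarySubstructure M, #N = ℵ₀ ∧ ∃ θ' : ι → L.Formula (N ⊕ α),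
      ∀ i (P : Type (max u v)) [L.Structure P] (w : M ⊕ α → P),
        (θ' i).Realize (w ∘ Sum.map N.subtype id) ↔ (θ i).Realize w := by
  classical
  let params : Set M := ⋃ i, Sum.inl ⁻¹' ((θ i).freeVarFinset : Set (M ⊕ α))
  have hparams : #params ≤ ℵ₀ := mk_le_aleph0_iff.2 <| Countable.to_subtype <|
    countable_iUnion fun i =>
      ((θ i).freeVarFinset.finite_toSet.preimage Sum.inl_injective.injOn).countable
  obtain ⟨N, hparamsN, hN⟩ := exists_elementarySubstructure_card_eq L params (ℵ₀ : Cardinal.{u})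
    le_rfl (by simpa using hparams) (by simpa using hL) (by simpa using hM)
  have hrange : ∀ i, ((θ i).freeVarFinset : Set (M ⊕ α)) ⊆ range (Sum.map N.subtype id) := by
    rintro i (m | a) hx
    · exact ⟨Sum.inl ⟨m, hparamsN (mem_iUnion.2 ⟨i, hx⟩)⟩, rfl⟩
    · exact ⟨Sum.inr a, rfl⟩
  -- the ascription fixes the universe of `P`, which `choose` cannot leave open
  choose θ' hθ' using fun i =>
    (exists_formula_realize_comp_iff (θ i) _ (hrange i)).imp fun _ h (P : Type (max u v)) => @h P
  exact ⟨N, by simpa using hN, θ', hθ'⟩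

theorem IsStableIn.of_aleph0 {T : L.Theory} (hL : L.card ≤ ℵ₀) (h0 : IsStableIn L T ℵ₀)
    {κ : Cardinal.{u}} (hκ : ℵ₀ ≤ κ) : IsStableIn L T κ := by
  intro M hM
  by_contra! hbig
  let A : L.Formula (M ⊕ Unit) → Set (typesOver L M) := fun θ =>
    (L.elementaryDiagram M).typesWith (paramSentenceEquiv M Unit θ)
  have hcard : #(L.Formula (M ⊕ Unit)) ≤ κ :=
    mk_formula_le hκ (by simpa [hM] using (add_one_eq hκ).le) (hL.trans hκ)
  have hsep : ∀ p q : typesOver L M, p ≠ q → ∃ θ, p ∈ A θ ∧ q ∉ A θ := fun p q hpq => by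
    obtain ⟨φ, hp, hq⟩ := exists_mem_notMem_of_ne hpq
    exact ⟨(paramSentenceEquiv M Unit).symm φ, by simpa [A] using hp, by simpa [A] using hq⟩
  obtain ⟨θ, p, hinj⟩ := exists_injective_cantorScheme A
    (fun θ => CompleteType.isClopen_typesWith _) hκ hcard hsep hbig
  obtain ⟨N, hN, θ', hθ'⟩ := exists_elementarySubstructure_aleph0_of_countable hL (hM ▸ hκ) θ
  choose q hq using fun σ => exists_completeType_restrict N.subtype (p σ)
  have hqinj : Function.Injective q := fun σ τ hστ => hinj <| funext fun s => by
    simp only [A, Theory.CompleteType.mem_typesWith_iff, ← hq _ _ _ (hθ' s), hστ]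
  have : Nonempty N := mk_ne_zero_iff.1 (hN ▸ aleph0_ne_zero)
  have : Countable (typesOver L N) := mk_le_aleph0_iff.1 (h0 (Theory.ModelType.of T N) hN)
  exact (mk_le_aleph0_iff.2 hqinj.countable).not_gt (by simpa [mk_arrow] using cantor ℵ₀)

end

theorem stable_at_uncountable_cofinality (T : L.Theory)
    (hL : L.card ≤ ℵ₀)
    (κ : Cardinal.{u}) (hcf : ℵ₀ < κ.ord.cof)
    (hstab : ∀ μ : Cardinal.{u}, ℵ₀ ≤ μ → μ < κ → IsStableIn L T μ) :
    IsStableIn L T κ := by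
  have hκ : ℵ₀ < κ := hcf.trans_le (Ordinal.cof_ord_le κ)
  exact (hstab ℵ₀ le_rfl hκ).of_aleph0 hL hκ.le

end StabilityTransfer
end

section
/- Let L be a countable first-order language and T a complete L-theory with infinite models. If T is stable in ℵ₀, then T is stable in every infinite cardinal. -/
/-!
Suppose `M ⊨ T` has cardinality `λ` but more than `λ` types. As there are only `λ` sentences
over `M`, every set of types of size `> λ` cut out by a sentence is split by some sentence into
two pieces of size `> λ`. Iterating produces a binary tree of sentences whose `2^ℵ₀` branches are
all realized by types over `M`. The tree uses only countably many parameters, which lie in a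
countable elementary submodel `S`; restricting the branch types to `S` yields `2^ℵ₀` types over
a countable model of `T`, contradicting `ℵ₀`-stability.
-/

universe u

open Cardinal FirstOrder FirstOrder.Language

namespace StabilityTransfer

variable (L : FirstOrder.Language.{u, u})

open Theory CompleteType

universe v w

section Cardinality

theorem card_withConstants_le {L : FirstOrder.Language.{u, v}} {α : Type w}
    {lam : Cardinal.{max u v w}} (hlam : ℵ₀ ≤ lam) (hL : lift.{w} L.card ≤ lam)
    (hα : lift.{max u v} #α ≤ lam) : L[[α]].card ≤ lam := by
  rw [card_withConstants]
  exact (add_le_add hL hα).trans (add_eq_self hlam).le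

theorem mk_sentence_le {L : Language} {lam : Cardinal} (hlam : ℵ₀ ≤ lam) (hL : L.card ≤ lam) :
    #L.Sentence ≤ lam :=
  calc #L.Sentence ≤ #(Σ n, L.BoundedFormula Empty n) :=
        mk_le_of_injective (f := Sigma.mk 0) sigma_mk_injective
    _ ≤ max ℵ₀ (lift #Empty + lift L.card) := BoundedFormula.card_le
    _ ≤ lam := by simpa using ⟨hlam, hL⟩

theorem aleph0_lt_mk_of_injective {X : Type*} {q : (ℕ → Bool) → X} (hq : q.Injective) :
    ℵ₀ < #X :=
  aleph0_lt_continuum.trans_le (by simpa using lift_mk_le_lift_mk_of_injective hq)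

end Cardinality

section Tree

variable {L : Language} {T : L.Theory} {α : Type*}

theorem exists_mem_and_mem_not_of_ne {p q : T.CompleteType α} (hpq : p ≠ q) :
    ∃ ψ, ψ ∈ p ∧ ∼ψ ∈ q := by
  by_contra! h
  refine hpq (SetLike.ext fun ψ => ⟨fun hp => ?_, fun hq => ?_⟩)
  · exact (q.mem_or_not_mem ψ).resolve_right (h ψ hp)
  · exact (p.mem_or_not_mem ψ).resolve_right fun hnp =>
      (q.not_mem_iff ψ).1 ((q.mem_or_not_mem _).resolve_right (h _ hnp)) hq

theorem exists_splitting_sentence {lam : Cardinal} (hlam : ℵ₀ ≤ lam)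
    (hS : #(L[[α]].Sentence) ≤ lam) {φ : L[[α]].Sentence} (hφ : lam < #(T.typesWith φ)) :
    ∃ ψ, lam < #(T.typesWith (φ ⊓ ψ)) ∧ lam < #(T.typesWith (φ ⊓ ∼ψ)) := by
  by_contra! h
  set small := {ψ : L[[α]].Sentence | #(T.typesWith (φ ⊓ ψ)) ≤ lam}
  set U := ⋃ ψ ∈ small, T.typesWith (φ ⊓ ψ)
  have hrest : (T.typesWith φ \ U).Subsingleton := by
    rintro p ⟨hp, hpU⟩ q ⟨hq, hqU⟩
    by_contra hpq
    obtain ⟨ψ, hψp, hψq⟩ := exists_mem_and_mem_not_of_ne hpq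
    by_cases hψ : ψ ∈ small
    · exact hpU (Set.mem_biUnion hψ (by rw [typesWith_inf]; exact ⟨hp, hψp⟩))
    · exact hqU (Set.mem_biUnion (h ψ (not_le.1 hψ)) (by rw [typesWith_inf]; exact ⟨hq, hψq⟩))
  have hU : #U ≤ lam := by
    refine (mk_biUnion_le _ _).trans ?_
    calc #small * ⨆ ψ : small, #(T.typesWith (φ ⊓ ψ)) ≤ lam * lam :=
          mul_le_mul' ((mk_set_le small).trans hS) (ciSup_le' fun ψ => ψ.2)
      _ = lam := mul_eq_self hlam
  refine hφ.not_ge ?_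
  calc #(T.typesWith φ) ≤ #(T.typesWith φ \ U ∪ U : Set _) :=
        mk_le_mk_of_subset (Set.subset_sdiff_union _ _)
    _ ≤ 1 + lam :=
        (mk_union_le _ _).trans (add_le_add (mk_le_one_iff_set_subsingleton.2 hrest) hU)
    _ = lam := add_eq_right hlam (one_le_aleph0.trans hlam)

/-- The sentence at address `s` of the binary tree grown by `split`: going left or right at a node
`φ` conjoins `split φ` or its negation. -/
def splitTree (split : L.Sentence → L.Sentence) (s : List Bool) : L.Sentence :=
  s.foldl (fun φ b => φ ⊓ (if b then split φ else ∼(split φ))) ⊤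

theorem splitTree_concat (split : L.Sentence → L.Sentence) (s : List Bool)
    (b : Bool) : splitTree split (s ++ [b]) =
      splitTree split s ⊓
        (if b then split (splitTree split s) else ∼(split (splitTree split s))) := by
  simp [splitTree]

theorem exists_branch_types {lam : Cardinal} (hlam : ℵ₀ ≤ lam)
    (hS : #(L[[α]].Sentence) ≤ lam) (hbig : lam < #(T.CompleteType α)) :
    ∃ (split : List Bool → L[[α]].Sentence) (p : (ℕ → Bool) → T.CompleteType α),
      ∀ σ n, split ((List.range n).map σ) ∈ p σ ↔ σ n = true := by
  have hsplit (φ : L[[α]].Sentence) : ∃ ψ, lam < #(T.typesWith φ) →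
      lam < #(T.typesWith (φ ⊓ ψ)) ∧ lam < #(T.typesWith (φ ⊓ ∼ψ)) := by
    by_cases hφ : lam < #(T.typesWith φ)
    · obtain ⟨ψ, hψ⟩ := exists_splitting_sentence hlam hS hφ
      exact ⟨ψ, fun _ => hψ⟩
    · exact ⟨⊤, fun h => absurd h hφ⟩
  choose split hsplit using hsplit
  have hbig (s : List Bool) : lam < #(T.typesWith (splitTree split s)) := by
    induction s using List.reverseRecOn with
    | nil => simpa [splitTree, typesWith_top] using hbig
    | append_singleton s b ih =>
      rw [splitTree_concat]
      cases b
      · exact (hsplit _ ih).2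
      · exact (hsplit _ ih).1
  have hbranch (σ : ℕ → Bool) : ∃ p : T.CompleteType α,
      ∀ n, splitTree split ((List.range n).map σ) ∈ p := by
    set t := fun n => T.typesWith (splitTree split ((List.range n).map σ))
    have hanti (n : ℕ) : t (n + 1) ⊆ t n := by
      simp only [t, List.range_succ, List.map_append, List.map_singleton, splitTree_concat,
        typesWith_inf]
      exact Set.inter_subset_left
    have hne (n : ℕ) : (t n).Nonempty :=
      Set.nonempty_iff_ne_empty.2 fun h => by simpa [t, h] using hbig ((List.range n).map σ)
    obtain ⟨p, hp⟩ := IsCompact.nonempty_iInter_of_sequence_nonempty_isCompact_isClosed t hanti hne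
      (isClosed_typesWith _).isCompact fun n => isClosed_typesWith _
    exact ⟨p, Set.mem_iInter.1 hp⟩
  choose p hp using hbranch
  refine ⟨fun s => split (splitTree split s), p, fun σ n => ?_⟩
  have h := hp σ (n + 1)
  rw [List.range_succ, List.map_append, List.map_singleton, splitTree_concat, ← mem_typesWith_iff,
    typesWith_inf] at h
  cases hσ : σ n
  · simpa [hσ, ← (p σ).not_mem_iff] using h.2
  · simpa [hσ] using h.2

theorem injective_of_branch_iff {X : Type*} {P : List Bool → X → Prop} {q : (ℕ → Bool) → X}
    (h : ∀ σ n, P ((List.range n).map σ) (q σ) ↔ σ n = true) : Function.Injective q := by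
  intro σ τ hστ
  by_contra hne
  have hdiff : ∃ n, σ n ≠ τ n := Function.ne_iff.1 hne
  have hpre : (List.range (Nat.find hdiff)).map σ = (List.range (Nat.find hdiff)).map τ :=
    List.map_congr_left fun k hk => not_not.1 (Nat.find_min hdiff (List.mem_range.1 hk))
  refine Nat.find_spec hdiff (Bool.eq_iff_iff.2 ?_)
  rw [← h, ← h, hpre, hστ]

end Tree

section Restriction

variable {L : Language} {A M : Type w} {α : Type*}

def paramFormula (φ : L[[M]][[α]].Sentence) : L.Formula (M ⊕ α) :=
  BoundedFormula.constantsVarsEquiv (Formula.equivSentence.symm φ)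

open Classical in
def params (φ : L[[M]][[α]].Sentence) : Set M :=
  Sum.inl ⁻¹' ((paramFormula φ).freeVarFinset : Set (M ⊕ α))

theorem params_finite (φ : L[[M]][[α]].Sentence) : (params φ).Finite := by
  classical
  exact (paramFormula φ).freeVarFinset.finite_toSet.preimage Sum.inl_injective.injOn

def relabelParams (g : M → A) (φ : L[[M]][[α]].Sentence) : L[[A]][[α]].Sentence :=
  Formula.equivSentence
    (BoundedFormula.constantsVarsEquiv.symm ((paramFormula φ).relabel (Sum.map g id)))

theorem paramFormula_relabelParams (g : M → A) (φ : L[[M]][[α]].Sentence) :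
    paramFormula (relabelParams g φ) = (paramFormula φ).relabel (Sum.map g id) := by
  simp [paramFormula, relabelParams]

theorem realize_paramFormula {X : Type*} [L.Structure X] [L[[M]].Structure X]
    [L[[M]][[α]].Structure X] [(L.lhomWithConstants M).IsExpansionOn X]
    [(L[[M]].lhomWithConstants α).IsExpansionOn X] (φ : L[[M]][[α]].Sentence) :
    (paramFormula φ).Realize (Sum.elim (fun m => (L.con m : X)) fun a => (L[[M]].con a : X)) ↔
      X ⊨ φ :=
  BoundedFormula.realize_constantsVarsEquiv.trans (Formula.realize_equivSentence_symm_con X φ)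

theorem realize_congr_of_eqOn_freeVarFinset [DecidableEq α] {X : Type*} [L.Structure X]
    (φ : L.Formula α) {v w : α → X} (h : Set.EqOn v w φ.freeVarFinset) :
    φ.Realize v ↔ φ.Realize w := by
  have hvw : v ∘ ((↑) : ↥(φ.freeVarFinset : Set α) → α) = w ∘ (↑) := funext fun a => h a.2
  rw [Formula.Realize, Formula.Realize, ← BoundedFormula.realize_restrictFreeVar' subset_rfl,
    ← BoundedFormula.realize_restrictFreeVar' subset_rfl (v := w), hvw]

variable (α) in
abbrev paramsLHom (f : A → M) : L[[A]][[α]] →ᴸ L[[M]][[α]] :=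
  (L.lhomWithConstantsMap f).addConstants α

theorem realize_onSentence_relabelParams {X : Type*} [L[[M]][[α]].Structure X] (f : A → M)
    (g : M → A) {φ : L[[M]][[α]].Sentence} (hfg : ∀ m ∈ params φ, f (g m) = m) :
    X ⊨ (paramsLHom α f).onSentence (relabelParams g φ) ↔ X ⊨ φ := by
  classical
  -- All structures are reducts of the given one, so both `L`-structures below agree by `rfl`.
  let : L[[M]].Structure X := (L[[M]].lhomWithConstants α).reduct X
  let : L.Structure X := (L.lhomWithConstants M).reduct X
  let : L[[A]][[α]].Structure X := (paramsLHom α f).reduct X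
  let : L[[A]].Structure X := (L[[A]].lhomWithConstants α).reduct X
  have : (L.lhomWithConstants A).IsExpansionOn X := ⟨fun _ _ => rfl, fun _ _ => rfl⟩
  rw [LHom.realize_onSentence, ← realize_paramFormula, ← realize_paramFormula,
    paramFormula_relabelParams, Formula.realize_relabel]
  refine realize_congr_of_eqOn_freeVarFinset _ fun x hx => ?_
  rcases x with m | a
  · exact congrArg (fun m' => (L.con m' : X)) (hfg m (by simpa [params] using hx))
  · rfl

theorem paramsLHom_onSentence_lhomWithConstants (f : A → M) (χ : L[[A]].Sentence) :
    (paramsLHom α f).onSentence ((L[[A]].lhomWithConstants α).onSentence χ) =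
      (L[[M]].lhomWithConstants α).onSentence ((L.lhomWithConstantsMap f).onSentence χ) := by
  change ((paramsLHom α f).onBoundedFormula ∘ (L[[A]].lhomWithConstants α).onBoundedFormula) χ =
    ((L[[M]].lhomWithConstants α).onBoundedFormula ∘
      (L.lhomWithConstantsMap f).onBoundedFormula) χ
  rw [← LHom.comp_onBoundedFormula, ← LHom.comp_onBoundedFormula]
  rfl

variable [L.Structure A] [L.Structure M]

theorem onSentence_lhomWithConstantsMap_mem_elementaryDiagram (f : A ↪ₑ[L] M)
    (χ : L[[A]].Sentence) :
    (L.lhomWithConstantsMap f).onSentence χ ∈ L.elementaryDiagram M ↔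
      χ ∈ L.elementaryDiagram A := by
  let : (constantsOn A).Structure M := constantsOn.structure f
  have : (LHom.constantsOnMap (f : A → M)).IsExpansionOn M := constantsOnMap_isExpansionOn rfl
  have : (L.lhomWithConstantsMap f).IsExpansionOn M := LHom.sumMap_isExpansionOn _ _ _
  rw [mem_completeTheory, mem_completeTheory, LHom.realize_onSentence,
    ← Formula.realize_equivSentence_symm_con A, ← f.map_formula]
  exact (Formula.realize_equivSentence_symm M χ f).symm

def restrictType (f : A ↪ₑ[L] M) (p : (L.elementaryDiagram M).CompleteType α) :
    (L.elementaryDiagram A).CompleteType α where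
  toTheory := (paramsLHom α f).onSentence ⁻¹' p.toTheory
  subset' := by
    rintro _ ⟨χ, hχ, rfl⟩
    rw [Set.mem_preimage, paramsLHom_onSentence_lhomWithConstants]
    exact p.subset ⟨_, (onSentence_lhomWithConstantsMap_mem_elementaryDiagram f χ).2 hχ, rfl⟩
  isMaximal' :=
    ⟨isSatisfiable_of_isSatisfiable_onTheory (paramsLHom α f)
      (p.isMaximal.1.mono (Set.image_preimage_subset _ _)), fun χ => p.mem_or_not_mem _⟩

theorem relabelParams_mem_restrictType (f : A ↪ₑ[L] M) {g : M → A}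
    {p : (L.elementaryDiagram M).CompleteType α} {φ : L[[M]][[α]].Sentence}
    (hfg : ∀ m ∈ params φ, f (g m) = m) : relabelParams g φ ∈ restrictType f p ↔ φ ∈ p := by
  change (paramsLHom α f).onSentence (relabelParams g φ) ∈ p.toTheory ↔ φ ∈ p.toTheory
  refine (p.isMaximal.mem_iff_models _).trans ((p.isMaximal.mem_iff_models φ).trans ?_).symm
  rw [models_sentence_iff, models_sentence_iff]
  exact forall_congr' fun X => (realize_onSentence_relabelParams f g hfg).symm

end Restriction

theorem stable_everywhere_of_omegaStable (T : L.Theory)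
    (hL : L.card ≤ ℵ₀)
    (hstab : IsStableIn L T ℵ₀) :
    ∀ lam : Cardinal.{u}, ℵ₀ ≤ lam → IsStableIn L T lam := by
  intro lam hlam M hM
  by_contra! hbig
  have hcard : L[[M]][[Unit]].card ≤ lam := by
    refine card_withConstants_le.{u, u, 0} hlam ?_ (by simpa using one_le_aleph0.trans hlam)
    simpa using card_withConstants_le.{u, u, u} hlam (by simpa using hL.trans hlam) (by simp [hM])
  obtain ⟨split, p, hp⟩ := exists_branch_types hlam (mk_sentence_le hlam hcard) hbig
  have hcount : #(⋃ s, params (split s)) ≤ ℵ₀ :=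
    le_aleph0_iff_set_countable.2 (Set.countable_iUnion fun s => (params_finite _).countable)
  obtain ⟨S, hparams, hS⟩ := exists_elementarySubstructure_card_eq L (⋃ s, params (split s))
    (ℵ₀ : Cardinal.{u}) le_rfl (by simpa only [lift_id] using hcount) (by simpa using hL)
    (by simpa [hM] using hlam)
  have hinj : Function.Injective fun σ => restrictType S.subtype (p σ) :=
    injective_of_branch_iff
      (P := fun s q => relabelParams (Function.invFun S.subtype) (split s) ∈ q) fun σ n =>
        (relabelParams_mem_restrictType _ fun m hm =>
          Function.invFun_eq ⟨⟨m, hparams (Set.mem_iUnion_of_mem _ hm)⟩, rfl⟩).trans (hp σ n)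
  exact (hstab (ModelType.of T S) (by simpa using hS)).not_gt (aleph0_lt_mk_of_injective hinj)

end StabilityTransfer
end

section
/- Let L be a first-order language and T a complete L-theory with infinite models, and let μ be an infinite cardinal with μ ≥ |L|. Let N ≼ M ≼ M' be models of T, all of cardinality μ, such that M is universal over N and M' is universal over M. If p ∈ S(M) does not split over N, then there exists a unique complete type p' ∈ S(M') such that p' extends p and p' does not split over N. -/
/-!
Since `M` is universal over `N`, `Mbig` embeds elementarily into `M` over `N` by some `f`, and the
candidate is the pullback `p' = f*p`, i.e. `φ(x, ā) ∈ p'` iff `φ(x, f ā) ∈ p`. The key point is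
that a type over a model which does not split over `N` is fixed by pulling back along any
elementary self-embedding `e` fixing `N`, since `ā` and `e ā` have the same type over `N`. With
`e = f|M` this shows that `p'` extends `p`; with `e = ι ∘ f` (`ι : M → Mbig` the inclusion) it
shows that every non-splitting extension `q` of `p` equals `f*(ι*q) = f*p`. Finally, `p'` does
not split over `N` because `ι ∘ f` preserves types over `N`.
-/

universe u

open Cardinal FirstOrder FirstOrder.Language

namespace StabilityTransfer

variable (L : FirstOrder.Language.{u, u})

/-- The formula `φ(x, ā)` with one free variable `x` obtained from the `L`-formula
`φ(x, ȳ)` by substituting the tuple `ā` of elements of `M` (as constants) for `ȳ`. -/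
noncomputable def withParams {M : Type u} [L.Structure M] {n : ℕ}
    (φ : L.Formula (Fin n ⊕ Unit)) (a : Fin n → M) : L[[M]].Formula Unit :=
  ((L.lhomWithConstants M).onFormula φ).subst
    (Sum.elim (fun i => ((L.con (a i)).term : L[[M]].Term Unit)) (fun u => Term.var u))

/-- Tuples `ā` and `b̄` from `M` realize the same complete type over the subset `A ⊆ M`:
they satisfy the same `L`-formulas with parameters from `A`. -/
def SameTypeOver {M : Type u} [L.Structure M] (A : Set M) {n : ℕ}
    (a b : Fin n → M) : Prop :=
  ∀ (m : ℕ) (c : Fin m → M), (∀ i, c i ∈ A) →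
    ∀ ψ : L.Formula (Fin m ⊕ Fin n),
      ψ.Realize (Sum.elim c a) ↔ ψ.Realize (Sum.elim c b)

/-- A complete 1-type `p ∈ S(M)` splits over a subset `A ⊆ M` if there are finite tuples
`ā`, `b̄` from `M` realizing the same complete type over `A` and an `L`-formula `φ(x, ȳ)`
with `φ(x, ā) ∈ p` and `¬φ(x, b̄) ∈ p`. -/
noncomputable def Splits {M : Type u} [L.Structure M]
    (p : typesOver L M) (A : Set M) : Prop :=
  ∃ (n : ℕ) (a b : Fin n → M) (φ : L.Formula (Fin n ⊕ Unit)),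
    SameTypeOver L A a b ∧
    Formula.equivSentence (withParams L φ a) ∈ p ∧
    Formula.equivSentence (Formula.not (withParams L φ b)) ∈ p

/-- The inclusion of an elementary substructure `M ≼ Mbig` induces a map on sentences
with constants from the respective model and one extra constant for the free variable;
`p' ∈ S(Mbig)` extends `p ∈ S(M)` if it contains the image of every sentence of `p`. -/
def ExtendsType {Mbig : Type u} [L.Structure Mbig] (M : L.ElementarySubstructure Mbig)
    (p : typesOver L (↥M)) (p' : typesOver L Mbig) : Prop :=
  ∀ ψ : (L[[↥M]])[[Unit]].Sentence, ψ ∈ p →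
    (((L.lhomWithConstantsMap ((↑) : ↥M → Mbig)).sumMap
        (LHom.id (constantsOn Unit))).onSentence ψ) ∈ p'

/-- `B` (a structure containing `A` via `incl`) is universal over `A` for models of `T`
of cardinality `μ`: every elementary extension of `A` of cardinality `μ` elementarily
embeds into `B` fixing `A` pointwise. -/
def UniversalOver (T : L.Theory) (A : Type u) [L.Structure A] (B : Type u)
    [L.Structure B] (incl : A → B) (μ : Cardinal.{u}) : Prop :=
  ∀ (A' : Theory.ModelType.{u, u, u} T) (g : A ↪ₑ[L] A'), #A' = μ →
    ∃ f : A' ↪ₑ[L] B, ∀ x : A, f (g x) = incl x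

theorem _root_.FirstOrder.Language.Theory.CompleteType.eq_of_subset {L : Language} {T : L.Theory}
    {α : Type*} {p q : T.CompleteType α} (h : ∀ ψ, ψ ∈ p → ψ ∈ q) : p = q :=
  SetLike.ext fun ψ => ⟨h ψ, fun hq => not_not.1 fun hp =>
    (q.not_mem_iff ψ).1 (h _ ((p.not_mem_iff ψ).2 hp)) hq⟩

theorem _root_.FirstOrder.Language.Formula.exists_fin_params {L : Language} {α β : Type*}
    (θ : L.Formula (α ⊕ β)) :
    ∃ (n : ℕ) (a : Fin n → α) (φ : L.Formula (Fin n ⊕ β)),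
      ∀ {K : Type*} [L.Structure K] (v : α → K) (w : β → K),
        φ.Realize (Sum.elim (v ∘ a) w) ↔ θ.Realize (Sum.elim v w) := by
  classical
  let t : Finset α := θ.freeVarFinset.preimage Sum.inl Sum.inl_injective.injOn
  let g : θ.freeVarFinset → Fin t.card ⊕ β
    | ⟨Sum.inl x, hx⟩ => Sum.inl (t.equivFin ⟨x, Finset.mem_preimage.2 hx⟩)
    | ⟨Sum.inr b, _⟩ => Sum.inr b
  refine ⟨t.card, fun i => t.equivFin.symm i, θ.restrictFreeVar g, fun v w => ?_⟩
  refine BoundedFormula.realize_restrictFreeVar _ fun ⟨x, hx⟩ => ?_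
  rcases x with x | b
  · simp [g]
  · rfl

section

variable {L} {W W' W'' : Type u} [L.Structure W] [L.Structure W'] [L.Structure W'']

theorem realize_withParams {K : Type u} [(L[[W]])[[Unit]].Structure K] {n : ℕ}
    (φ : L.Formula (Fin n ⊕ Unit)) (a : Fin n → W) :
    letI : L[[W]].Structure K := ((L[[W]]).lhomWithConstants Unit).reduct K
    letI : L.Structure K := (L.lhomWithConstants W).reduct K
    (K ⊨ Formula.equivSentence (withParams L φ a)) ↔
      φ.Realize (Sum.elim (fun i => (L.con (a i) : K)) fun u => ((L[[W]]).con u : K)) := by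
  let _ : L[[W]].Structure K := ((L[[W]]).lhomWithConstants Unit).reduct K
  let _ : L.Structure K := (L.lhomWithConstants W).reduct K
  have : (L.lhomWithConstants W).IsExpansionOn K := LHom.isExpansionOn_reduct _ K
  have : ((L[[W]]).lhomWithConstants Unit).IsExpansionOn K := LHom.isExpansionOn_reduct _ K
  rw [Formula.realize_equivSentence, withParams, Formula.Realize, BoundedFormula.realize_subst,
    LHom.onFormula, LHom.realize_onBoundedFormula]
  refine iff_of_eq (congrArg₂ _ (funext fun x => ?_) rfl)
  rcases x with i | u
  · exact Term.realize_constants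
  · rfl

theorem exists_withParams_iff (ψ : (L[[W]])[[Unit]].Sentence) :
    ∃ (n : ℕ) (a : Fin n → W) (φ : L.Formula (Fin n ⊕ Unit)),
      ∀ (K : Type u) [(L[[W]])[[Unit]].Structure K],
        K ⊨ Formula.equivSentence (withParams L φ a) ↔ K ⊨ ψ := by
  obtain ⟨n, a, φ, hφ⟩ := Formula.exists_fin_params (BoundedFormula.constantsVarsEquiv
    (Formula.equivSentence.symm ψ : L[[W]].BoundedFormula Unit 0))
  refine ⟨n, a, φ, fun K _ => ?_⟩
  let _ : L[[W]].Structure K := ((L[[W]]).lhomWithConstants Unit).reduct K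
  let _ : L.Structure K := (L.lhomWithConstants W).reduct K
  have : (L.lhomWithConstants W).IsExpansionOn K := LHom.isExpansionOn_reduct _ K
  have : ((L[[W]]).lhomWithConstants Unit).IsExpansionOn K := LHom.isExpansionOn_reduct _ K
  rw [realize_withParams, ← Formula.realize_equivSentence_symm_con K ψ]
  exact (hφ _ _).trans BoundedFormula.realize_constantsVarsEquiv

theorem mem_iff_realize_of_model (q : typesOver L W) {K : Type u}
    [(L[[W]])[[Unit]].Structure K] [K ⊨ (q : (L[[W]])[[Unit]].Theory)]
    (ψ : (L[[W]])[[Unit]].Sentence) : ψ ∈ q ↔ K ⊨ ψ := by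
  refine ⟨Theory.realize_sentence_of_mem (q : (L[[W]])[[Unit]].Theory), fun hψ => ?_⟩
  by_contra hq
  exact Theory.realize_sentence_of_mem (q : (L[[W]])[[Unit]].Theory)
    ((q.not_mem_iff ψ).2 hq) hψ

theorem mem_congr (q : typesOver L W) {ψ ψ' : (L[[W]])[[Unit]].Sentence}
    (h : ∀ (K : Type u) [(L[[W]])[[Unit]].Structure K], K ⊨ ψ ↔ K ⊨ ψ') :
    ψ ∈ q ↔ ψ' ∈ q := by
  obtain ⟨K⟩ := q.isMaximal.1
  rw [mem_iff_realize_of_model q (K := K), mem_iff_realize_of_model q (K := K), h]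

theorem ext_withParams {q₁ q₂ : typesOver L W}
    (h : ∀ (n : ℕ) (a : Fin n → W) (φ : L.Formula (Fin n ⊕ Unit)),
      Formula.equivSentence (withParams L φ a) ∈ q₁ ↔
        Formula.equivSentence (withParams L φ a) ∈ q₂) :
    q₁ = q₂ := by
  refine SetLike.ext fun ψ => ?_
  obtain ⟨n, a, φ, hψ⟩ := exists_withParams_iff ψ
  rw [← mem_congr q₁ hψ, ← mem_congr q₂ hψ, h]

theorem SameTypeOver.symm {A : Set W} {n : ℕ} {a b : Fin n → W} (h : SameTypeOver L A a b) :
    SameTypeOver L A b a :=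
  fun m c hc ψ => (h m c hc ψ).symm

theorem SameTypeOver.trans {A : Set W} {n : ℕ} {a b d : Fin n → W}
    (hab : SameTypeOver L A a b) (hbd : SameTypeOver L A b d) : SameTypeOver L A a d :=
  fun m c hc ψ => (hab m c hc ψ).trans (hbd m c hc ψ)

theorem sameTypeOver_comp_of_forall_eq {A : Set W} (e : W ↪ₑ[L] W) (he : ∀ x ∈ A, e x = x)
    {n : ℕ} (a : Fin n → W) : SameTypeOver L A a (e ∘ a) := by
  intro m c hc ψ
  have hc' : e ∘ Sum.elim c a = Sum.elim c (e ∘ a) := by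
    ext (i | i)
    exacts [he _ (hc i), rfl]
  rw [← e.map_formula, hc']

theorem SameTypeOver.of_comp {A : Set W} {A' : Set W'} (g : W' ↪ₑ[L] W)
    (hg : ∀ x ∈ A', g x ∈ A) {n : ℕ} {a b : Fin n → W'}
    (h : SameTypeOver L A (g ∘ a) (g ∘ b)) : SameTypeOver L A' a b := by
  intro m c hc ψ
  rw [← g.map_formula, ← g.map_formula, Sum.comp_elim, Sum.comp_elim]
  exact h m (g ∘ c) (fun i => hg _ (hc i)) ψ

theorem withParams_mem_iff_of_not_splits {q : typesOver L W} {A : Set W}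
    (hq : ¬ Splits L q A) {n : ℕ} {a b : Fin n → W} (hab : SameTypeOver L A a b)
    (φ : L.Formula (Fin n ⊕ Unit)) :
    Formula.equivSentence (withParams L φ a) ∈ q ↔
      Formula.equivSentence (withParams L φ b) ∈ q := by
  have splits_of {a b : Fin n → W} (hab : SameTypeOver L A a b)
      (ha : Formula.equivSentence (withParams L φ a) ∈ q)
      (hb : Formula.equivSentence (withParams L φ b) ∉ q) : Splits L q A :=
    ⟨n, a, b, φ, hab, ha, by rwa [Formula.equivSentence_not, q.not_mem_iff]⟩
  exact ⟨fun ha => not_not.1 fun hb => hq (splits_of hab ha hb),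
    fun hb => not_not.1 fun ha => hq (splits_of hab.symm hb ha)⟩

theorem realize_sentence_iff_of_forall_eq_con {K : Type u} [L.Structure K] [L[[W]].Structure K]
    [(L.lhomWithConstants W).IsExpansionOn K] (g : W ↪ₑ[L] K)
    (hg : ∀ x : W, g x = (L.con x : K)) (σ : L[[W]].Sentence) : K ⊨ σ ↔ W ⊨ σ := by
  have hv : g ∘ Sum.elim (fun x : W => (L.con x : W)) (default : Empty → W) =
      Sum.elim (fun x : W => (L.con x : K)) default := by
    ext (x | e)
    exacts [hg x, e.elim]
  rw [Sentence.Realize, Sentence.Realize, Formula.Realize, Formula.Realize,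
    ← BoundedFormula.realize_constantsVarsEquiv,
    ← BoundedFormula.realize_constantsVarsEquiv, ← hv]
  exact g.map_formula (BoundedFormula.constantsVarsEquiv (σ : L[[W]].BoundedFormula Empty 0)) _

variable (L) in
def paramMap (g : W' → W) : (L[[W']])[[Unit]] →ᴸ (L[[W]])[[Unit]] :=
  (L.lhomWithConstantsMap g).sumMap (LHom.id (constantsOn Unit))

theorem realize_paramMap_withParams {K : Type u} [(L[[W]])[[Unit]].Structure K] (g : W' → W)
    {n : ℕ} (φ : L.Formula (Fin n ⊕ Unit)) (a : Fin n → W') :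
    K ⊨ (paramMap L g).onSentence (Formula.equivSentence (withParams L φ a)) ↔
      K ⊨ Formula.equivSentence (withParams L φ (g ∘ a)) := by
  let _ : (L[[W']])[[Unit]].Structure K := (paramMap L g).reduct K
  have : (paramMap L g).IsExpansionOn K := LHom.isExpansionOn_reduct _ K
  rw [LHom.realize_onSentence, realize_withParams, realize_withParams]
  rfl

theorem paramMap_onSentence_mem_of_mem_elementaryDiagram (g : W' ↪ₑ[L] W) (q : typesOver L W)
    {σ : L[[W']].Sentence} (hσ : σ ∈ L.elementaryDiagram W') :
    (paramMap L g).onSentence (((L[[W']]).lhomWithConstants Unit).onSentence σ) ∈ q := by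
  obtain ⟨K⟩ := q.isMaximal.1
  rw [mem_iff_realize_of_model q (K := K)]
  let _ : L[[W]].Structure K := ((L[[W]]).lhomWithConstants Unit).reduct K
  let _ : L.Structure K := (L.lhomWithConstants W).reduct K
  have : ((L[[W]]).lhomWithConstants Unit).IsExpansionOn K := LHom.isExpansionOn_reduct _ _
  have : (L.lhomWithConstants W).IsExpansionOn K := LHom.isExpansionOn_reduct _ _
  have : K ⊨ L.elementaryDiagram W := (Theory.model_iff _).2 fun σ' hσ' => by
    rw [← LHom.realize_onSentence (M := K) ((L[[W]]).lhomWithConstants Unit)]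
    exact Theory.realize_sentence_of_mem (q : (L[[W]])[[Unit]].Theory)
      (q.subset (Set.mem_image_of_mem _ hσ'))
  let _ : (L[[W']])[[Unit]].Structure K := (paramMap L g).reduct K
  let _ : L[[W']].Structure K := ((L[[W']]).lhomWithConstants Unit).reduct K
  have : (paramMap L g).IsExpansionOn K := LHom.isExpansionOn_reduct _ _
  have : ((L[[W']]).lhomWithConstants Unit).IsExpansionOn K := LHom.isExpansionOn_reduct _ _
  -- the `L`-reducts of `K` through `L[[W]]` and through `L[[W']]` coincide definitionally
  have : (L.lhomWithConstants W').IsExpansionOn K := ⟨fun _ _ => rfl, fun _ _ => rfl⟩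
  rw [LHom.realize_onSentence, LHom.realize_onSentence, realize_sentence_iff_of_forall_eq_con
    ((ElementaryEmbedding.ofModelsElementaryDiagram L W K).comp g) fun _ => rfl]
  exact hσ

theorem isSatisfiable_preimage_paramMap {V : Type u} (g : V → W) (q : typesOver L W) :
    Theory.IsSatisfiable {ψ | (paramMap L g).onSentence ψ ∈ q} := by
  obtain ⟨K⟩ := q.isMaximal.1
  let _ : (L[[V]])[[Unit]].Structure K := (paramMap L g).reduct K
  have : (paramMap L g).IsExpansionOn K := LHom.isExpansionOn_reduct _ _
  have : (K : Type u) ⊨ {ψ | (paramMap L g).onSentence ψ ∈ q} :=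
    (Theory.model_iff _).2 fun ψ hψ => (LHom.realize_onSentence (M := K) _ ψ).1
      (Theory.realize_sentence_of_mem (q : (L[[W]])[[Unit]].Theory) hψ)
  exact ⟨⟨K⟩⟩

def comap (g : W' ↪ₑ[L] W) (q : typesOver L W) : typesOver L W' where
  toTheory := {ψ | (paramMap L g).onSentence ψ ∈ q}
  subset' := by
    rintro _ ⟨σ, hσ, rfl⟩
    exact paramMap_onSentence_mem_of_mem_elementaryDiagram g q hσ
  isMaximal' := ⟨isSatisfiable_preimage_paramMap g q, fun ψ => q.mem_or_not_mem _⟩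

theorem withParams_mem_comap {g : W' ↪ₑ[L] W} {q : typesOver L W} {n : ℕ}
    {φ : L.Formula (Fin n ⊕ Unit)} {a : Fin n → W'} :
    Formula.equivSentence (withParams L φ a) ∈ comap g q ↔
      Formula.equivSentence (withParams L φ (g ∘ a)) ∈ q :=
  mem_congr q fun _ _ => realize_paramMap_withParams g φ a

theorem comap_comp (g : W' ↪ₑ[L] W) (h : W'' ↪ₑ[L] W') (q : typesOver L W) :
    comap (g.comp h) q = comap h (comap g q) :=
  ext_withParams fun _ _ _ => by
    rw [withParams_mem_comap, withParams_mem_comap, withParams_mem_comap]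
    rfl

theorem comap_eq_self_of_not_splits {q : typesOver L W} {A : Set W} (hq : ¬ Splits L q A)
    (e : W ↪ₑ[L] W) (he : ∀ x ∈ A, e x = x) : comap e q = q :=
  ext_withParams fun _ a φ => withParams_mem_comap.trans
    (withParams_mem_iff_of_not_splits hq (sameTypeOver_comp_of_forall_eq e he a) φ).symm

theorem not_splits_comap {q : typesOver L W} {A : Set W} {A' : Set W'} (hq : ¬ Splits L q A)
    (g : W' ↪ₑ[L] W) (hg : ∀ (n : ℕ) (a b : Fin n → W'),
      SameTypeOver L A' a b → SameTypeOver L A (g ∘ a) (g ∘ b)) :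
    ¬ Splits L (comap g q) A' := by
  rintro ⟨n, a, b, φ, hab, ha, hb⟩
  rw [Formula.equivSentence_not, Theory.CompleteType.not_mem_iff, withParams_mem_comap] at hb
  exact hb ((withParams_mem_iff_of_not_splits hq (hg n a b hab) φ).1 (withParams_mem_comap.1 ha))

theorem extendsType_iff {V : Type u} [L.Structure V] (M : L.ElementarySubstructure V)
    (p : typesOver L M) (q : typesOver L V) : ExtendsType L M p q ↔ comap M.subtype q = p :=
  ⟨fun h => (Theory.CompleteType.eq_of_subset (q := comap M.subtype q) h).symm,
    by rintro rfl _ hψ; exact hψ⟩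

end

theorem unique_nonsplitting_extension (T : L.Theory) (μ : Cardinal.{u})
    (Mbig : Theory.ModelType.{u, u, u} T) (hMbig : #Mbig = μ)
    (N M : L.ElementarySubstructure Mbig) (hNM : N ≤ M)
    (hMuniv : UniversalOver L T (↥N) (↥M) (Set.inclusion hNM) μ)
    (p : typesOver L (↥M))
    (hp : ¬ Splits L p (((↑) : ↥M → Mbig) ⁻¹' (N : Set Mbig))) :
    ∃! p' : typesOver L Mbig,
      ExtendsType L M p p' ∧ ¬ Splits L p' (N : Set Mbig) := by
  obtain ⟨f, hf⟩ := hMuniv Mbig N.subtype hMbig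
  let j : Mbig ↪ₑ[L] Mbig := M.subtype.comp f
  have hj : ∀ x ∈ (N : Set Mbig), j x = x := fun x hx => congrArg Subtype.val (hf ⟨x, hx⟩)
  refine ⟨comap f p, ⟨?_, ?_⟩, fun q ⟨hq, hqs⟩ => ?_⟩
  · rw [extendsType_iff, ← comap_comp]
    exact comap_eq_self_of_not_splits hp _ fun x hx => Subtype.ext (hj x hx)
  · refine not_splits_comap hp f fun n a b hab => SameTypeOver.of_comp M.subtype (fun _ => id) ?_
    exact (sameTypeOver_comp_of_forall_eq j hj a).symm.trans
      (hab.trans (sameTypeOver_comp_of_forall_eq j hj b))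
  · rw [extendsType_iff] at hq
    rw [← hq, ← comap_comp]
    exact (comap_eq_self_of_not_splits hqs j hj).symm

end StabilityTransfer
end
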